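/- For every natural number n and every real number p > -1, ∫_0^1 x^p · P_n(2x-1) dx = Γ(p+1)^2 / (Γ(p-n+1) · Γ(p+n+2)), where P_n(2x-1) = ∑_{k=0}^{n} binom(n,k)^2 · (x-1)^{n-k} · x^k is the shifted Legendre polynomial and Γ is the real Gamma function (with the convention that the right-hand side is 0 when p-n+1 is a nonpositive integer, corresponding to the reciprocal Gamma function vanishing there). -/

import Mathlib

/-!
Expanding `P_n(2x-1)` into monomials, each term integrates to a Beta value
`∫₀¹ x^(p+k) (x-1)^(n-k) dx = (-1)^(n-k) (n-k)! Γ(p+k+1) / Γ(p+n+2)`.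
Writing `Γ(p+k+1) = k! Γ(p+1) C(p+k, k)` with generalized binomial coefficients, the moment
becomes `n! Γ(p+1) / Γ(p+n+2)` times `∑ₖ (-1)^(n-k) C(n,k) C(p+k,k)`. This alternating sum is the
`n`-th forward difference at `0` of `k ↦ C(p+k,k)`, which by Pascal's rule is `C(p,n)`, and
`n! C(p,n) = Γ(p+1) / Γ(p-n+1)`.
-/

/-- The shifted Legendre polynomial `P_n(2x-1) = ∑_{k=0}^n binom(n,k)^2 (x-1)^{n-k} x^k`. -/
noncomputable def shiftedLegendre (n : ℕ) (x : ℝ) : ℝ :=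
  ∑ k ∈ Finset.range (n + 1), (n.choose k : ℝ) ^ 2 * (x - 1) ^ (n - k) * x ^ k

open Finset fwdDiff

/-- Valid for all `s`, including `s = 0`, because Mathlib sets `Γ 0 = 0`. -/
theorem Real.inv_Gamma_eq_mul_inv_Gamma_add_one (s : ℝ) :
    (Real.Gamma s)⁻¹ = s * (Real.Gamma (s + 1))⁻¹ := by
  rcases eq_or_ne s 0 with rfl | hs
  · simp [Real.Gamma_zero]
  · rw [Real.Gamma_add_one hs, mul_inv, ← mul_assoc, mul_inv_cancel₀ hs, one_mul]

/-- When `r - k + 1` is a pole of `Γ`, both sides vanish: the left one as a division by `0`. -/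
theorem Real.Gamma_div_Gamma_sub_nat_eq_descPochhammer_eval {r : ℝ}
    (hr : Real.Gamma (r + 1) ≠ 0) (k : ℕ) :
    Real.Gamma (r + 1) / Real.Gamma (r - k + 1) = (descPochhammer ℝ k).eval r := by
  induction k with
  | zero => simp [hr]
  | succ k ih =>
    have hs : r - ((k + 1 : ℕ) : ℝ) + 1 + 1 = r - k + 1 := by push_cast; ring
    rw [descPochhammer_succ_eval, ← ih, div_eq_mul_inv, div_eq_mul_inv,
      Real.inv_Gamma_eq_mul_inv_Gamma_add_one, hs]
    push_cast
    ring

theorem Real.ringChoose_eq_Gamma_div_Gamma {r : ℝ} (hr : Real.Gamma (r + 1) ≠ 0) (k : ℕ) :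
    Ring.choose r k = Real.Gamma (r + 1) / Real.Gamma (r - k + 1) / k.factorial := by
  rw [Ring.choose_eq_smul, Real.Gamma_div_Gamma_sub_nat_eq_descPochhammer_eval hr, smul_eq_mul,
    ← Polynomial.aeval_eq_smeval, Polynomial.aeval_def, Polynomial.eval₂_eq_eval_map,
    descPochhammer_map, inv_mul_eq_div]

section BinomialRing

variable {R : Type*} [CommRing R] [BinomialRing R]

theorem fwdDiff_iter_ringChoose_add_self (r : R) (j : ℕ) :
    (Δ_[1])^[j] (fun k : ℕ ↦ Ring.choose (r + k) k) =
      fun k : ℕ ↦ Ring.choose (r + k) (k + j) := by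
  induction j with
  | zero => rfl
  | succ j ih =>
    ext k
    rw [Function.iterate_succ_apply', ih, fwdDiff, Nat.cast_succ, ← add_assoc,
      add_right_comm k 1 j, Ring.choose_succ_succ, add_sub_cancel_left, add_assoc]

theorem sum_neg_one_pow_mul_choose_smul_ringChoose_add_self (r : R) (n : ℕ) :
    ∑ k ∈ range (n + 1), ((-1 : ℤ) ^ (n - k) * n.choose k) • Ring.choose (r + k) k =
      Ring.choose r n := by
  have h := fwdDiff_iter_eq_sum_shift 1 (fun k : ℕ ↦ Ring.choose (r + k) k) n 0
  rw [fwdDiff_iter_ringChoose_add_self] at h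
  simpa using h.symm

end BinomialRing

theorem integral_rpow_mul_one_sub_rpow {a b : ℝ} (ha : -1 < a) (hb : -1 < b) :
    ∫ x in (0 : ℝ)..1, x ^ a * (1 - x) ^ b =
      Real.Gamma (a + 1) * Real.Gamma (b + 1) / Real.Gamma (a + b + 2) := by
  have hΓ : Real.Gamma (a + b + 2) ≠ 0 := (Real.Gamma_pos_of_pos (by linarith)).ne'
  rw [eq_div_iff hΓ, mul_comm]
  apply Complex.ofReal_injective
  have hbeta := Complex.Gamma_mul_Gamma_eq_betaIntegral (s := (a + 1 : ℝ)) (t := (b + 1 : ℝ))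
    (by simp; linarith) (by simp; linarith)
  push_cast [← Complex.Gamma_ofReal] at hbeta ⊢
  rw [hbeta, show (a : ℂ) + 1 + (b + 1) = a + b + 2 by ring, Complex.betaIntegral,
    ← intervalIntegral.integral_ofReal]
  congr 1
  refine intervalIntegral.integral_congr fun x hx ↦ ?_
  rw [Set.uIcc_of_le zero_le_one] at hx
  simp only [add_sub_cancel_right]
  push_cast [Complex.ofReal_cpow hx.1, Complex.ofReal_cpow (sub_nonneg.2 hx.2)]
  rfl

theorem integral_rpow_mul_sub_one_pow_mul_pow {a : ℝ} (ha : -1 < a) (m k : ℕ) :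
    ∫ x in (0 : ℝ)..1, x ^ a * ((x - 1) ^ m * x ^ k) =
      (-1) ^ m * m.factorial * Real.Gamma (a + k + 1) / Real.Gamma (a + (m + k : ℕ) + 2) := by
  have hak : -1 < a + k := by have := k.cast_nonneg (α := ℝ); linarith
  have hm : (-1 : ℝ) < m := by have := m.cast_nonneg (α := ℝ); linarith
  calc ∫ x in (0 : ℝ)..1, x ^ a * ((x - 1) ^ m * x ^ k)
      = ∫ x in (0 : ℝ)..1, (-1) ^ m * (x ^ (a + k) * (1 - x) ^ (m : ℝ)) := by
        refine intervalIntegral.integral_congr_ae (.of_forall fun x hx ↦ ?_)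
        rw [Set.uIoc_of_le zero_le_one] at hx
        rw [Real.rpow_add_natCast hx.1.ne', Real.rpow_natCast, ← neg_sub, neg_pow]
        ring
    _ = (-1) ^ m * m.factorial * Real.Gamma (a + k + 1) / Real.Gamma (a + (m + k : ℕ) + 2) := by
        rw [intervalIntegral.integral_const_mul, integral_rpow_mul_one_sub_rpow hak hm,
          Real.Gamma_nat_eq_factorial]
        push_cast
        ring_nf

theorem sum_neg_one_pow_mul_choose_sq_mul_factorial_mul_Gamma {r : ℝ} (hr : -1 < r) (n : ℕ) :
    ∑ k ∈ range (n + 1), (-1) ^ (n - k) * (n.choose k : ℝ) ^ 2 * (n - k).factorial *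
        Real.Gamma (r + k + 1) =
      Real.Gamma (r + 1) ^ 2 / Real.Gamma (r - n + 1) := by
  have hΓr : Real.Gamma (r + 1) ≠ 0 := (Real.Gamma_pos_of_pos (by linarith)).ne'
  have hΓ (k : ℕ) :
      Real.Gamma (r + k + 1) = k.factorial * Real.Gamma (r + 1) * Ring.choose (r + k) k := by
    have hpos : 0 < r + k + 1 := by have := k.cast_nonneg (α := ℝ); linarith
    rw [Real.ringChoose_eq_Gamma_div_Gamma (Real.Gamma_pos_of_pos hpos).ne', add_sub_cancel_right]
    field_simp
  have hterm : ∀ k ∈ range (n + 1),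
      (-1) ^ (n - k) * (n.choose k : ℝ) ^ 2 * (n - k).factorial * Real.Gamma (r + k + 1) =
        n.factorial * Real.Gamma (r + 1) *
          (((-1 : ℤ) ^ (n - k) * n.choose k) • Ring.choose (r + k) k) := by
    intro k hk
    rw [hΓ, zsmul_eq_mul, ← Nat.choose_mul_factorial_mul_factorial (mem_range_succ_iff.1 hk)]
    push_cast
    ring
  rw [sum_congr rfl hterm, ← mul_sum, sum_neg_one_pow_mul_choose_smul_ringChoose_add_self,
    Real.ringChoose_eq_Gamma_div_Gamma hΓr]
  field_simp

theorem stmt_11 (n : ℕ) (p : ℝ) (hp : -1 < p) :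
    ∫ x in (0 : ℝ)..1, x ^ p * shiftedLegendre n x
    = Real.Gamma (p + 1) ^ 2 / (Real.Gamma (p - n + 1) * Real.Gamma (p + n + 2)) := by
  have hint : ∀ k ∈ range (n + 1), IntervalIntegrable
      (fun x : ℝ ↦ x ^ p * ((n.choose k : ℝ) ^ 2 * (x - 1) ^ (n - k) * x ^ k))
      MeasureTheory.volume 0 1 :=
    fun k _ ↦ (intervalIntegral.intervalIntegrable_rpow' hp).mul_continuousOn
      (by fun_prop : Continuous _).continuousOn
  have hterm : ∀ k ∈ range (n + 1),
      ∫ x in (0 : ℝ)..1, x ^ p * ((n.choose k : ℝ) ^ 2 * (x - 1) ^ (n - k) * x ^ k) =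
        (-1) ^ (n - k) * (n.choose k : ℝ) ^ 2 * (n - k).factorial * Real.Gamma (p + k + 1) /
          Real.Gamma (p + n + 2) := by
    intro k hk
    have hassoc (x : ℝ) : x ^ p * ((n.choose k : ℝ) ^ 2 * (x - 1) ^ (n - k) * x ^ k) =
        (n.choose k : ℝ) ^ 2 * (x ^ p * ((x - 1) ^ (n - k) * x ^ k)) := by ring
    simp_rw [hassoc]
    rw [intervalIntegral.integral_const_mul, integral_rpow_mul_sub_one_pow_mul_pow hp,
      Nat.sub_add_cancel (mem_range_succ_iff.1 hk)]
    ring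
  simp only [shiftedLegendre, mul_sum]
  rw [intervalIntegral.integral_finsetSum hint, sum_congr rfl hterm, ← sum_div,
    sum_neg_one_pow_mul_choose_sq_mul_factorial_mul_Gamma hp, div_div]
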